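/- arXiv:math/0208190 — 2 statements merged into one kernel-verified Lean document; each statement's English description precedes it below -/
import Mathlib

section
/- Let γ : ℝ → ℤ → ℂ² be a flow on discrete curves with coefficients α, β, and assume g_k(t) ≠ 0 and u_k(t) ≠ 0 for all t,k. Then for all t and k: ∂_t u_k = u_k(α_{k−1} + α_{k+1}) + β_{k−1}·(g_k/(u_{k−1} g_{k−1}))·(g_{k−2} + g_{k−1}) − β_{k+1}·(g_{k−1}/(u_{k+1} g_k))·(g_k + g_{k+1}) + u_k·(β_{k+1}/g_k − β_{k−1}/g_{k−1}). -/
noncomputable section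

/-- The determinant of two vectors in `ℂ²`. -/
def det2 (a b : ℂ × ℂ) : ℂ := a.1 * b.2 - a.2 * b.1

/-- `g_k(t) = det(γ_k(t), γ_{k+1}(t))` for a time-dependent discrete curve. -/
def gD (γ : ℝ → ℤ → ℂ × ℂ) (t : ℝ) (k : ℤ) : ℂ := det2 (γ t k) (γ t (k + 1))

/-- `u_k(t) = det(γ_{k-1}(t), γ_{k+1}(t))` for a time-dependent discrete curve. -/
def uD (γ : ℝ → ℤ → ℂ × ℂ) (t : ℝ) (k : ℤ) : ℂ := det2 (γ t (k - 1)) (γ t (k + 1))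

private lemma hasDerivAt_fst' {f : ℝ → ℂ × ℂ} {d : ℂ × ℂ} {t : ℝ}
    (h : HasDerivAt f d t) : HasDerivAt (fun s => (f s).1) d.1 t := by
  simpa using (h.hasFDerivAt.fst).hasDerivAt

private lemma hasDerivAt_snd' {f : ℝ → ℂ × ℂ} {d : ℂ × ℂ} {t : ℝ}
    (h : HasDerivAt f d t) : HasDerivAt (fun s => (f s).2) d.2 t := by
  simpa using (h.hasFDerivAt.snd).hasDerivAt

/-- For a flow `∂_t γ_k = α_k γ_k + (β_k/u_k)(γ_{k+1} - γ_{k-1})` on discrete curves in `ℂ²`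
with `g_k ≠ 0` and `u_k ≠ 0`, the determinants `u_k = det(γ_{k-1}, γ_{k+1})` satisfy
`∂_t u_k = u_k(α_{k-1} + α_{k+1})
  + β_{k-1} (g_k/(u_{k-1} g_{k-1})) (g_{k-2} + g_{k-1})
  - β_{k+1} (g_{k-1}/(u_{k+1} g_k)) (g_k + g_{k+1})
  + u_k (β_{k+1}/g_k - β_{k-1}/g_{k-1})`. -/
theorem stmt2 (γ : ℝ → ℤ → ℂ × ℂ) (α β : ℝ → ℤ → ℂ)
    (hg : ∀ (t : ℝ) (k : ℤ), gD γ t k ≠ 0)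
    (hu : ∀ (t : ℝ) (k : ℤ), uD γ t k ≠ 0)
    (hflow : ∀ (t : ℝ) (k : ℤ), HasDerivAt (fun s => γ s k)
      (α t k • γ t k + (β t k / uD γ t k) • (γ t (k + 1) - γ t (k - 1))) t) :
    ∀ (t : ℝ) (k : ℤ), HasDerivAt (fun s => uD γ s k)
      (uD γ t k * (α t (k - 1) + α t (k + 1))
        + β t (k - 1) * (gD γ t k / (uD γ t (k - 1) * gD γ t (k - 1)))
            * (gD γ t (k - 2) + gD γ t (k - 1))
        - β t (k + 1) * (gD γ t (k - 1) / (uD γ t (k + 1) * gD γ t k))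
            * (gD γ t k + gD γ t (k + 1))
        + uD γ t k * (β t (k + 1) / gD γ t k - β t (k - 1) / gD γ t (k - 1))) t := by
  intro t k
  have h1 := hflow t (k - 1)
  have h2 := hflow t (k + 1)
  rw [show k - 1 + 1 = k from by ring, show k - 1 - 1 = k - 2 from by ring] at h1
  rw [show k + 1 + 1 = k + 2 from by ring, show k + 1 - 1 = k from by ring] at h2
  have D : HasDerivAt (fun s => uD γ s k) _ t := ((hasDerivAt_fst' h1).mul (hasDerivAt_snd' h2)).sub
    ((hasDerivAt_snd' h1).mul (hasDerivAt_fst' h2))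
  have hgm1 := hg t (k - 1); have hgk := hg t k
  have hum1 := hu t (k - 1); have huk := hu t k; have hup1 := hu t (k + 1)
  simp only [det2, gD, uD, ne_eq, show k - 1 + 1 = k from by ring,
    show k - 1 - 1 = k - 2 from by ring, show k + 1 - 1 = k from by ring,
    show k + 1 + 1 = k + 2 from by ring] at hgm1 hgk hum1 huk hup1
  convert D using 1
  simp only [det2, gD, uD, Prod.fst_add, Prod.snd_add, Prod.smul_fst, Prod.smul_snd,
      Prod.fst_sub, Prod.snd_sub, smul_eq_mul,
      show k - 1 + 1 = k from by ring, show k - 1 - 1 = k - 2 from by ring,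
      show k + 1 + 1 = k + 2 from by ring, show k + 1 - 1 = k from by ring,
      show k - 2 + 1 = k - 1 from by ring]
  have n1 : (γ t k).2 * (γ t (k - 2)).1 - (γ t k).1 * (γ t (k - 2)).2 ≠ 0 := fun h => hum1 (by linear_combination h)
  have n2 : (γ t (k + 1)).2 * (γ t k).1 - (γ t (k + 1)).1 * (γ t k).2 ≠ 0 := fun h => hgk (by linear_combination h)
  field_simp
  ring
end
end

section
/- Let γ : ℝ → ℤ → ℂ² be a flow on discrete curves with g_k(t) ≠ 0, g_{k−1}(t) + g_k(t) ≠ 0 and u_k(t) ≠ 0 for all t,k. Fix λ ∈ ℂ, set p_k = u_k/(g_k g_{k−1}) − λ, and let the coefficients be α_k = −(1/2)·((g_{k−1} − g_k)/(g_{k−1} + g_k))·(p_k³ + λ³ − 2(p_k + λ) g_k^{−1} g_{k−1}^{−1}) − (1/2) g_k^{−2}(2p_k + p_{k+1}) + (1/2) g_{k−1}^{−2}(p_{k−1} + 2p_k) and β_k = −(g_{k−1} g_k (p_k + λ)/(g_{k−1} + g_k))·(g_{k−1}^{−2} + g_k^{−2} + p_k² − λ p_k + λ²). Then for all t and k the third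 Toda lattice hierarchy flow equations hold: (∂_t g_k)/g_k = −(1/2)·((p_{k+1}³ + p_{k+2} g_{k+1}^{−2} + 2p_{k+1} g_{k+1}^{−2} + p_{k+1} g_k^{−2}) − (p_k³ + p_{k−1} g_{k−1}^{−2} + p_k g_k^{−2} + 2p_k g_{k−1}^{−2})) and ∂_t p_k = g_k^{−2}(p_{k+1}² + p_k² + p_{k+1} p_k + g_{k+1}^{−2} + g_k^{−2}) − g_{k−1}^{−2}(p_k² + p_{k−1}² + p_k p_{k−1} + g_{k−1}^{−2} + g_{k−2}^{−2}). -/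
noncomputable section

/-- The Flaschka–Manakov variable `p_k = u_k/(g_k g_{k-1}) - λ`. -/
def pD (γ : ℝ → ℤ → ℂ × ℂ) (lam : ℂ) (t : ℝ) (k : ℤ) : ℂ :=
  uD γ t k / (gD γ t k * gD γ t (k - 1)) - lam

lemma det2_self (x : ℂ × ℂ) : det2 x x = 0 := by simp [det2, mul_comm]

lemma pluck (a b c d : ℂ × ℂ) :
    det2 a b * det2 c d - det2 a c * det2 b d + det2 a d * det2 b c = 0 := by
  simp only [det2]; ring

lemma det2_left (a c : ℂ) (x y z w : ℂ × ℂ) :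
    det2 (a • x + c • (y - z)) w = a * det2 x w + c * (det2 y w - det2 z w) := by
  simp only [det2, Prod.fst_add, Prod.snd_add, Prod.fst_sub, Prod.snd_sub,
    Prod.smul_fst, Prod.smul_snd, smul_eq_mul]
  ring

lemma det2_right (a c : ℂ) (x y z w : ℂ × ℂ) :
    det2 w (a • x + c • (y - z)) = a * det2 w x + c * (det2 w y - det2 w z) := by
  simp only [det2, Prod.fst_add, Prod.snd_add, Prod.fst_sub, Prod.snd_sub,
    Prod.smul_fst, Prod.smul_snd, smul_eq_mul]
  ring

lemma hasDerivAt_det2 {f g : ℝ → ℂ × ℂ} {f' g' : ℂ × ℂ} {t : ℝ}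
    (hf : HasDerivAt f f' t) (hg : HasDerivAt g g' t) :
    HasDerivAt (fun s => det2 (f s) (g s)) (det2 f' (g t) + det2 (f t) g') t := by
  have h1 : HasDerivAt (fun s => (f s).1) f'.1 t :=
    (hasFDerivAt_fst (𝕜 := ℝ) (p := f t)).comp_hasDerivAt t hf
  have h2 : HasDerivAt (fun s => (f s).2) f'.2 t :=
    (hasFDerivAt_snd (𝕜 := ℝ) (p := f t)).comp_hasDerivAt t hf
  have h3 : HasDerivAt (fun s => (g s).1) g'.1 t :=
    (hasFDerivAt_fst (𝕜 := ℝ) (p := g t)).comp_hasDerivAt t hg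
  have h4 : HasDerivAt (fun s => (g s).2) g'.2 t :=
    (hasFDerivAt_snd (𝕜 := ℝ) (p := g t)).comp_hasDerivAt t hg
  have h := ((h1.mul h4).sub (h2.mul h3))
  convert h using 1
  · rfl
  · funext s; simp only [det2, Pi.sub_apply, Pi.mul_apply]
  simp only [det2]
  ring

lemma algA (gm1 g0 g1 lam pm1 p0 p1 p2 a0 a1 b0 b1 : ℂ)
    (hgm1 : gm1 ≠ 0) (hg0 : g0 ≠ 0) (hg1 : g1 ≠ 0)
    (hs0 : gm1 + g0 ≠ 0) (hs1 : g0 + g1 ≠ 0)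
    (ha0 : a0 = -(1 / 2) * ((gm1 - g0) / (gm1 + g0)) *
          (p0 ^ 3 + lam ^ 3 - 2 * (p0 + lam) * g0⁻¹ * gm1⁻¹)
        - (1 / 2) * (g0 ^ 2)⁻¹ * (2 * p0 + p1)
        + (1 / 2) * (gm1 ^ 2)⁻¹ * (pm1 + 2 * p0))
    (ha1 : a1 = -(1 / 2) * ((g0 - g1) / (g0 + g1)) *
          (p1 ^ 3 + lam ^ 3 - 2 * (p1 + lam) * g1⁻¹ * g0⁻¹)
        - (1 / 2) * (g1 ^ 2)⁻¹ * (2 * p1 + p2)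
        + (1 / 2) * (g0 ^ 2)⁻¹ * (p0 + 2 * p1))
    (hb0 : b0 = -(gm1 * g0 * (p0 + lam) / (gm1 + g0)) *
        ((gm1 ^ 2)⁻¹ + (g0 ^ 2)⁻¹ + p0 ^ 2 - lam * p0 + lam ^ 2))
    (hb1 : b1 = -(g0 * g1 * (p1 + lam) / (g0 + g1)) *
        ((g0 ^ 2)⁻¹ + (g1 ^ 2)⁻¹ + p1 ^ 2 - lam * p1 + lam ^ 2)) :
    a0 * g0 - b0 + (a1 * g0 + b1) =
      g0 * (-(1 / 2) *
        ((p1 ^ 3 + p2 * (g1 ^ 2)⁻¹ + 2 * p1 * (g1 ^ 2)⁻¹ + p1 * (g0 ^ 2)⁻¹)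
          - (p0 ^ 3 + pm1 * (gm1 ^ 2)⁻¹ + p0 * (g0 ^ 2)⁻¹ + 2 * p0 * (gm1 ^ 2)⁻¹))) := by
  have e1 : (gm1 + g0)⁻¹ * (gm1 + g0) = 1 := inv_mul_cancel₀ hs0
  have e1' : (g0 + g1)⁻¹ * (g0 + g1) = 1 := inv_mul_cancel₀ hs1
  have e2 : gm1⁻¹ * gm1 = 1 := inv_mul_cancel₀ hgm1
  have e3 : g0⁻¹ * g0 = 1 := inv_mul_cancel₀ hg0
  have e3' : g1⁻¹ * g1 = 1 := inv_mul_cancel₀ hg1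
  have e4 : (gm1 ^ 2)⁻¹ * gm1 ^ 2 = 1 := inv_mul_cancel₀ (pow_ne_zero 2 hgm1)
  have e5 : (g0 ^ 2)⁻¹ * g0 ^ 2 = 1 := inv_mul_cancel₀ (pow_ne_zero 2 hg0)
  have e6 : (g1 ^ 2)⁻¹ * g1 ^ 2 = 1 := inv_mul_cancel₀ (pow_ne_zero 2 hg1)
  have hA0 : a0 * (2 * (gm1 + g0) * gm1 ^ 2 * g0 ^ 2) =
      (gm1 - g0) * (-(gm1 ^ 2 * g0 ^ 2) * (p0 ^ 3 + lam ^ 3) + 2 * (p0 + lam) * gm1 * g0)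
        - (gm1 + g0) * gm1 ^ 2 * (2 * p0 + p1) + (gm1 + g0) * g0 ^ 2 * (pm1 + 2 * p0) := by
    rw [ha0]
    linear_combination (-(gm1 - g0) * (p0 ^ 3 + lam ^ 3) * gm1 ^ 2 * g0 ^ 2
        + 2 * (p0 + lam) * (gm1 - g0) * g0⁻¹ * gm1⁻¹ * gm1 ^ 2 * g0 ^ 2) * e1
      + (2 * (p0 + lam) * (gm1 - g0) * g0⁻¹ * gm1 * g0 ^ 2) * e2
      + (2 * (p0 + lam) * (gm1 - g0) * gm1 * g0) * e3
      + (-(2 * p0 + p1) * (gm1 + g0) * gm1 ^ 2) * e5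
      + ((pm1 + 2 * p0) * (gm1 + g0) * g0 ^ 2) * e4
  have hA1 : a1 * (2 * (g0 + g1) * g0 ^ 2 * g1 ^ 2) =
      (g0 - g1) * (-(g0 ^ 2 * g1 ^ 2) * (p1 ^ 3 + lam ^ 3) + 2 * (p1 + lam) * g0 * g1)
        - (g0 + g1) * g0 ^ 2 * (2 * p1 + p2) + (g0 + g1) * g1 ^ 2 * (p0 + 2 * p1) := by
    rw [ha1]
    linear_combination (-(g0 - g1) * (p1 ^ 3 + lam ^ 3) * g0 ^ 2 * g1 ^ 2
        + 2 * (p1 + lam) * (g0 - g1) * g1⁻¹ * g0⁻¹ * g0 ^ 2 * g1 ^ 2) * e1'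
      + (2 * (p1 + lam) * (g0 - g1) * g1⁻¹ * g0 * g1 ^ 2) * e3
      + (2 * (p1 + lam) * (g0 - g1) * g0 * g1) * e3'
      + (-(2 * p1 + p2) * (g0 + g1) * g0 ^ 2) * e6
      + ((p0 + 2 * p1) * (g0 + g1) * g1 ^ 2) * e5
  have hB0 : b0 * ((gm1 + g0) * gm1 ^ 2 * g0 ^ 2) =
      -(gm1 * g0 * (p0 + lam)) *
        (g0 ^ 2 + gm1 ^ 2 + (p0 ^ 2 - lam * p0 + lam ^ 2) * gm1 ^ 2 * g0 ^ 2) := by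
    rw [hb0]
    linear_combination (-(gm1 * g0 * (p0 + lam)) *
        ((gm1 ^ 2)⁻¹ + (g0 ^ 2)⁻¹ + p0 ^ 2 - lam * p0 + lam ^ 2) * gm1 ^ 2 * g0 ^ 2) * e1
      + (-(gm1 * g0 * (p0 + lam)) * g0 ^ 2) * e4
      + (-(gm1 * g0 * (p0 + lam)) * gm1 ^ 2) * e5
  have hB1 : b1 * ((g0 + g1) * g0 ^ 2 * g1 ^ 2) =
      -(g0 * g1 * (p1 + lam)) *
        (g1 ^ 2 + g0 ^ 2 + (p1 ^ 2 - lam * p1 + lam ^ 2) * g0 ^ 2 * g1 ^ 2) := by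
    rw [hb1]
    linear_combination (-(g0 * g1 * (p1 + lam)) *
        ((g0 ^ 2)⁻¹ + (g1 ^ 2)⁻¹ + p1 ^ 2 - lam * p1 + lam ^ 2) * g0 ^ 2 * g1 ^ 2) * e1'
      + (-(g0 * g1 * (p1 + lam)) * g1 ^ 2) * e5
      + (-(g0 * g1 * (p1 + lam)) * g0 ^ 2) * e6
  have hR : (g0 * (-(1 / 2) *
        ((p1 ^ 3 + p2 * (g1 ^ 2)⁻¹ + 2 * p1 * (g1 ^ 2)⁻¹ + p1 * (g0 ^ 2)⁻¹)
          - (p0 ^ 3 + pm1 * (gm1 ^ 2)⁻¹ + p0 * (g0 ^ 2)⁻¹ + 2 * p0 * (gm1 ^ 2)⁻¹)))) *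
      (gm1 ^ 2 * g0 ^ 2 * g1 ^ 2) =
      g0 * (-(1 / 2)) *
        ((p1 ^ 3 * (gm1 ^ 2 * g0 ^ 2 * g1 ^ 2) + (p2 + 2 * p1) * gm1 ^ 2 * g0 ^ 2
            + p1 * gm1 ^ 2 * g1 ^ 2)
          - (p0 ^ 3 * (gm1 ^ 2 * g0 ^ 2 * g1 ^ 2) + (pm1 + 2 * p0) * g0 ^ 2 * g1 ^ 2
            + p0 * gm1 ^ 2 * g1 ^ 2)) := by
    linear_combination (g0 * (-(1 / 2)) * (p2 + 2 * p1) * gm1 ^ 2 * g0 ^ 2) * e6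
      + (g0 * (-(1 / 2)) * (p1 - p0) * gm1 ^ 2 * g1 ^ 2) * e5
      + (g0 * (1 / 2) * (pm1 + 2 * p0) * g0 ^ 2 * g1 ^ 2) * e4
  apply mul_right_cancel₀ (show (2 * (gm1 + g0) * gm1 ^ 2 * g0 ^ 2) *
      (2 * (g0 + g1) * g0 ^ 2 * g1 ^ 2) ≠ 0 from
    mul_ne_zero
      (mul_ne_zero (mul_ne_zero (mul_ne_zero two_ne_zero hs0) (pow_ne_zero 2 hgm1))
        (pow_ne_zero 2 hg0))
      (mul_ne_zero (mul_ne_zero (mul_ne_zero two_ne_zero hs1) (pow_ne_zero 2 hg0))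
        (pow_ne_zero 2 hg1)))
  linear_combination (g0 * (2 * (g0 + g1) * g0 ^ 2 * g1 ^ 2)) * hA0
    + (g0 * (2 * (gm1 + g0) * gm1 ^ 2 * g0 ^ 2)) * hA1
    + (-(2 * (2 * (g0 + g1) * g0 ^ 2 * g1 ^ 2))) * hB0
    + (2 * (2 * (gm1 + g0) * gm1 ^ 2 * g0 ^ 2)) * hB1
    + (-(4 * (gm1 + g0) * (g0 + g1) * g0 ^ 2)) * hR

lemma algB (gm2 gm1 g0 g1 um1 u0 u1 lam pm1 p0 p1 am1 a0 a1 bm1 b0 b1 X Y : ℂ)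
    (hgm2 : gm2 ≠ 0) (hgm1 : gm1 ≠ 0) (hg0 : g0 ≠ 0) (hg1 : g1 ≠ 0)
    (hsm1 : gm2 + gm1 ≠ 0) (hs0 : gm1 + g0 ≠ 0) (hs1 : g0 + g1 ≠ 0)
    (hum1 : um1 ≠ 0) (hu1 : u1 ≠ 0)
    (heum1 : um1 = (pm1 + lam) * (gm1 * gm2))
    (heu0 : u0 = (p0 + lam) * (g0 * gm1))
    (heu1 : u1 = (p1 + lam) * (g1 * g0))
    (hX : X * gm1 = um1 * u0 - gm2 * g0)
    (hY : Y * g0 = u0 * u1 - gm1 * g1)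
    (ha0 : a0 = -(1 / 2) * ((gm1 - g0) / (gm1 + g0)) *
          (p0 ^ 3 + lam ^ 3 - 2 * (p0 + lam) * g0⁻¹ * gm1⁻¹)
        - (1 / 2) * (g0 ^ 2)⁻¹ * (2 * p0 + p1)
        + (1 / 2) * (gm1 ^ 2)⁻¹ * (pm1 + 2 * p0))
    (hbm1 : bm1 = -(gm2 * gm1 * (pm1 + lam) / (gm2 + gm1)) *
        ((gm2 ^ 2)⁻¹ + (gm1 ^ 2)⁻¹ + pm1 ^ 2 - lam * pm1 + lam ^ 2))
    (hb0 : b0 = -(gm1 * g0 * (p0 + lam) / (gm1 + g0)) *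
        ((gm1 ^ 2)⁻¹ + (g0 ^ 2)⁻¹ + p0 ^ 2 - lam * p0 + lam ^ 2))
    (hb1 : b1 = -(g0 * g1 * (p1 + lam) / (g0 + g1)) *
        ((g0 ^ 2)⁻¹ + (g1 ^ 2)⁻¹ + p1 ^ 2 - lam * p1 + lam ^ 2)) :
    ((am1 * u0 + bm1 / um1 * (g0 - X) + (a1 * u0 + b1 / u1 * (Y - gm1))) * (g0 * gm1)
      - u0 * ((a0 * g0 - b0 + (a1 * g0 + b1)) * gm1
        + g0 * (am1 * gm1 - bm1 + (a0 * gm1 + b0)))) / (g0 * gm1) ^ 2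
    = (g0 ^ 2)⁻¹ * (p1 ^ 2 + p0 ^ 2 + p1 * p0 + (g1 ^ 2)⁻¹ + (g0 ^ 2)⁻¹)
      - (gm1 ^ 2)⁻¹ * (p0 ^ 2 + pm1 ^ 2 + p0 * pm1 + (gm1 ^ 2)⁻¹ + (gm2 ^ 2)⁻¹) := by
  subst heum1 heu0 heu1
  have e1m : (gm2 + gm1)⁻¹ * (gm2 + gm1) = 1 := inv_mul_cancel₀ hsm1
  have e1 : (gm1 + g0)⁻¹ * (gm1 + g0) = 1 := inv_mul_cancel₀ hs0
  have e1' : (g0 + g1)⁻¹ * (g0 + g1) = 1 := inv_mul_cancel₀ hs1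
  have e2 : gm1⁻¹ * gm1 = 1 := inv_mul_cancel₀ hgm1
  have e3 : g0⁻¹ * g0 = 1 := inv_mul_cancel₀ hg0
  have fm2 : (gm2 ^ 2)⁻¹ * gm2 ^ 2 = 1 := inv_mul_cancel₀ (pow_ne_zero 2 hgm2)
  have fm1 : (gm1 ^ 2)⁻¹ * gm1 ^ 2 = 1 := inv_mul_cancel₀ (pow_ne_zero 2 hgm1)
  have f0 : (g0 ^ 2)⁻¹ * g0 ^ 2 = 1 := inv_mul_cancel₀ (pow_ne_zero 2 hg0)
  have f1 : (g1 ^ 2)⁻¹ * g1 ^ 2 = 1 := inv_mul_cancel₀ (pow_ne_zero 2 hg1)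
  have hA0 : a0 * (2 * (gm1 + g0) * gm1 ^ 2 * g0 ^ 2) =
      (gm1 - g0) * (-(gm1 ^ 2 * g0 ^ 2) * (p0 ^ 3 + lam ^ 3) + 2 * (p0 + lam) * gm1 * g0)
        - (gm1 + g0) * gm1 ^ 2 * (2 * p0 + p1) + (gm1 + g0) * g0 ^ 2 * (pm1 + 2 * p0) := by
    rw [ha0]
    linear_combination (-(gm1 - g0) * (p0 ^ 3 + lam ^ 3) * gm1 ^ 2 * g0 ^ 2
        + 2 * (p0 + lam) * (gm1 - g0) * g0⁻¹ * gm1⁻¹ * gm1 ^ 2 * g0 ^ 2) * e1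
      + (2 * (p0 + lam) * (gm1 - g0) * g0⁻¹ * gm1 * g0 ^ 2) * e2
      + (2 * (p0 + lam) * (gm1 - g0) * gm1 * g0) * e3
      + (-(2 * p0 + p1) * (gm1 + g0) * gm1 ^ 2) * f0
      + ((pm1 + 2 * p0) * (gm1 + g0) * g0 ^ 2) * fm1
  have hBm1 : bm1 * ((gm2 + gm1) * gm2 ^ 2 * gm1 ^ 2) =
      -(gm2 * gm1 * (pm1 + lam)) *
        (gm1 ^ 2 + gm2 ^ 2 + (pm1 ^ 2 - lam * pm1 + lam ^ 2) * gm2 ^ 2 * gm1 ^ 2) := by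
    rw [hbm1]
    linear_combination (-(gm2 * gm1 * (pm1 + lam)) *
        ((gm2 ^ 2)⁻¹ + (gm1 ^ 2)⁻¹ + pm1 ^ 2 - lam * pm1 + lam ^ 2) * gm2 ^ 2 * gm1 ^ 2) * e1m
      + (-(gm2 * gm1 * (pm1 + lam)) * gm1 ^ 2) * fm2
      + (-(gm2 * gm1 * (pm1 + lam)) * gm2 ^ 2) * fm1
  have hB0 : b0 * ((gm1 + g0) * gm1 ^ 2 * g0 ^ 2) =
      -(gm1 * g0 * (p0 + lam)) *
        (g0 ^ 2 + gm1 ^ 2 + (p0 ^ 2 - lam * p0 + lam ^ 2) * gm1 ^ 2 * g0 ^ 2) := by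
    rw [hb0]
    linear_combination (-(gm1 * g0 * (p0 + lam)) *
        ((gm1 ^ 2)⁻¹ + (g0 ^ 2)⁻¹ + p0 ^ 2 - lam * p0 + lam ^ 2) * gm1 ^ 2 * g0 ^ 2) * e1
      + (-(gm1 * g0 * (p0 + lam)) * g0 ^ 2) * fm1
      + (-(gm1 * g0 * (p0 + lam)) * gm1 ^ 2) * f0
  have hB1 : b1 * ((g0 + g1) * g0 ^ 2 * g1 ^ 2) =
      -(g0 * g1 * (p1 + lam)) *
        (g1 ^ 2 + g0 ^ 2 + (p1 ^ 2 - lam * p1 + lam ^ 2) * g0 ^ 2 * g1 ^ 2) := by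
    rw [hb1]
    linear_combination (-(g0 * g1 * (p1 + lam)) *
        ((g0 ^ 2)⁻¹ + (g1 ^ 2)⁻¹ + p1 ^ 2 - lam * p1 + lam ^ 2) * g0 ^ 2 * g1 ^ 2) * e1'
      + (-(g0 * g1 * (p1 + lam)) * g1 ^ 2) * f0
      + (-(g0 * g1 * (p1 + lam)) * g0 ^ 2) * f1
  have eU : ((pm1 + lam) * (gm1 * gm2))⁻¹ * ((pm1 + lam) * (gm1 * gm2)) = 1 :=
    inv_mul_cancel₀ hum1
  have eU1 : ((p1 + lam) * (g1 * g0))⁻¹ * ((p1 + lam) * (g1 * g0)) = 1 :=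
    inv_mul_cancel₀ hu1
  have hT1 : bm1 / ((pm1 + lam) * (gm1 * gm2)) * (g0 - X) * (((pm1 + lam) * (gm1 * gm2)) * gm1) =
      bm1 * (g0 * gm1 - (((pm1 + lam) * (gm1 * gm2)) * ((p0 + lam) * (g0 * gm1)) - gm2 * g0)) := by
    linear_combination (bm1 * (g0 - X) * gm1) * eU + (-bm1) * hX
  have hT2 : b1 / ((p1 + lam) * (g1 * g0)) * (Y - gm1) * (((p1 + lam) * (g1 * g0)) * g0) =
      b1 * ((((p0 + lam) * (g0 * gm1)) * ((p1 + lam) * (g1 * g0)) - gm1 * g1) - gm1 * g0) := by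
    linear_combination (b1 * (Y - gm1) * g0) * eU1 + b1 * hY
  have hR2 : ((g0 ^ 2)⁻¹ * (p1 ^ 2 + p0 ^ 2 + p1 * p0 + (g1 ^ 2)⁻¹ + (g0 ^ 2)⁻¹)
      - (gm1 ^ 2)⁻¹ * (p0 ^ 2 + pm1 ^ 2 + p0 * pm1 + (gm1 ^ 2)⁻¹ + (gm2 ^ 2)⁻¹)) *
      (gm2 ^ 2 * gm1 ^ 4 * g0 ^ 4 * g1 ^ 2) =
      gm2 ^ 2 * gm1 ^ 4 * g0 ^ 2 * g1 ^ 2 * (p1 ^ 2 + p0 ^ 2 + p1 * p0)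
        + gm2 ^ 2 * gm1 ^ 4 * g0 ^ 2 + gm2 ^ 2 * gm1 ^ 4 * g1 ^ 2
        - (gm2 ^ 2 * gm1 ^ 2 * g0 ^ 4 * g1 ^ 2 * (p0 ^ 2 + pm1 ^ 2 + p0 * pm1)
          + gm2 ^ 2 * g0 ^ 4 * g1 ^ 2 + gm1 ^ 2 * g0 ^ 4 * g1 ^ 2) := by
    linear_combination ((p1 ^ 2 + p0 ^ 2 + p1 * p0) * gm2 ^ 2 * gm1 ^ 4 * g0 ^ 2 * g1 ^ 2
        + gm2 ^ 2 * gm1 ^ 4 * g0 ^ 2 + (g0 ^ 2)⁻¹ * gm2 ^ 2 * gm1 ^ 4 * g0 ^ 2 * g1 ^ 2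
        + gm2 ^ 2 * gm1 ^ 4 * g1 ^ 2) * f0
      + ((g0 ^ 2)⁻¹ * gm2 ^ 2 * gm1 ^ 4 * g0 ^ 4) * f1
      + (-((p0 ^ 2 + pm1 ^ 2 + p0 * pm1) * gm2 ^ 2 * gm1 ^ 2 * g0 ^ 4 * g1 ^ 2
        + (gm1 ^ 2)⁻¹ * gm2 ^ 2 * gm1 ^ 2 * g0 ^ 4 * g1 ^ 2
        + gm2 ^ 2 * g0 ^ 4 * g1 ^ 2 + gm1 ^ 2 * g0 ^ 4 * g1 ^ 2)) * fm1
      + (-((gm1 ^ 2)⁻¹ * gm1 ^ 4 * g0 ^ 4 * g1 ^ 2)) * fm2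
  rw [div_eq_iff (pow_ne_zero 2 (mul_ne_zero hg0 hgm1))]
  apply mul_right_cancel₀ (show ((pm1 + lam) * (gm1 * gm2)) * ((p1 + lam) * (g1 * g0)) *
      (2 * (gm2 + gm1) * gm2 ^ 2 * gm1 ^ 2) * (2 * (gm1 + g0) * gm1 ^ 2 * g0 ^ 2) *
      (2 * (g0 + g1) * g0 ^ 2 * g1 ^ 2) ≠ 0 from
    mul_ne_zero (mul_ne_zero (mul_ne_zero (mul_ne_zero hum1 hu1)
      (mul_ne_zero (mul_ne_zero (mul_ne_zero two_ne_zero hsm1) (pow_ne_zero 2 hgm2))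
        (pow_ne_zero 2 hgm1)))
      (mul_ne_zero (mul_ne_zero (mul_ne_zero two_ne_zero hs0) (pow_ne_zero 2 hgm1))
        (pow_ne_zero 2 hg0)))
      (mul_ne_zero (mul_ne_zero (mul_ne_zero two_ne_zero hs1) (pow_ne_zero 2 hg0))
        (pow_ne_zero 2 hg1)))
  linear_combination
    (g0 * ((p1 + lam) * (g1 * g0)) * ((2 * (gm2 + gm1) * gm2 ^ 2 * gm1 ^ 2) *
      (2 * (gm1 + g0) * gm1 ^ 2 * g0 ^ 2) * (2 * (g0 + g1) * g0 ^ 2 * g1 ^ 2))) * hT1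
    + (gm1 * ((pm1 + lam) * (gm1 * gm2)) * ((2 * (gm2 + gm1) * gm2 ^ 2 * gm1 ^ 2) *
      (2 * (gm1 + g0) * gm1 ^ 2 * g0 ^ 2) * (2 * (g0 + g1) * g0 ^ 2 * g1 ^ 2))) * hT2
    + (-(2 * ((p0 + lam) * (g0 * gm1)) * g0 * gm1 * ((pm1 + lam) * (gm1 * gm2)) *
      ((p1 + lam) * (g1 * g0)) * (2 * (gm2 + gm1) * gm2 ^ 2 * gm1 ^ 2) *
      (2 * (g0 + g1) * g0 ^ 2 * g1 ^ 2))) * hA0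
    + (((p0 + lam) * (g0 * gm1)) * g0 * ((pm1 + lam) * (gm1 * gm2)) *
        ((p1 + lam) * (g1 * g0)) * 2 * (2 * (gm1 + g0) * gm1 ^ 2 * g0 ^ 2) *
        (2 * (g0 + g1) * g0 ^ 2 * g1 ^ 2)
      + 2 * g0 * ((p1 + lam) * (g1 * g0)) * (2 * (gm1 + g0) * gm1 ^ 2 * g0 ^ 2) *
        (2 * (g0 + g1) * g0 ^ 2 * g1 ^ 2) *
        (g0 * gm1 - (((pm1 + lam) * (gm1 * gm2)) * ((p0 + lam) * (g0 * gm1)) - gm2 * g0))) * hBm1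
    + ((((p0 + lam) * (g0 * gm1)) * gm1 - ((p0 + lam) * (g0 * gm1)) * g0) *
      ((pm1 + lam) * (gm1 * gm2)) * ((p1 + lam) * (g1 * g0)) * 2 *
      (2 * (gm2 + gm1) * gm2 ^ 2 * gm1 ^ 2) * (2 * (g0 + g1) * g0 ^ 2 * g1 ^ 2)) * hB0
    + (-(((p0 + lam) * (g0 * gm1)) * gm1 * ((pm1 + lam) * (gm1 * gm2)) *
        ((p1 + lam) * (g1 * g0)) * 2 * (2 * (gm2 + gm1) * gm2 ^ 2 * gm1 ^ 2) *
        (2 * (gm1 + g0) * gm1 ^ 2 * g0 ^ 2))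
      + 2 * gm1 * ((pm1 + lam) * (gm1 * gm2)) * (2 * (gm2 + gm1) * gm2 ^ 2 * gm1 ^ 2) *
        (2 * (gm1 + g0) * gm1 ^ 2 * g0 ^ 2) *
        ((((p0 + lam) * (g0 * gm1)) * ((p1 + lam) * (g1 * g0)) - gm1 * g1) - gm1 * g0)) * hB1
    + (-(8 * gm1 ^ 2 * g0 ^ 2 * ((pm1 + lam) * (gm1 * gm2)) * ((p1 + lam) * (g1 * g0)) *
      (gm2 + gm1) * (gm1 + g0) * (g0 + g1))) * hR2

/-- For the flow on discrete curves in `ℂ²` with coefficients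
`α_k = -(1/2)((g_{k-1} - g_k)/(g_{k-1} + g_k))(p_k³ + λ³ - 2(p_k + λ) g_k⁻¹ g_{k-1}⁻¹)
       - (1/2) g_k⁻²(2p_k + p_{k+1}) + (1/2) g_{k-1}⁻²(p_{k-1} + 2p_k)` and
`β_k = -(g_{k-1} g_k (p_k + λ)/(g_{k-1} + g_k))(g_{k-1}⁻² + g_k⁻² + p_k² - λ p_k + λ²)`,
the third Toda lattice hierarchy flow equations hold:
`(∂_t g_k)/g_k = -(1/2)((p_{k+1}³ + p_{k+2} g_{k+1}⁻² + 2p_{k+1} g_{k+1}⁻² + p_{k+1} g_k⁻²)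
                        - (p_k³ + p_{k-1} g_{k-1}⁻² + p_k g_k⁻² + 2p_k g_{k-1}⁻²))` and
`∂_t p_k = g_k⁻²(p_{k+1}² + p_k² + p_{k+1} p_k + g_{k+1}⁻² + g_k⁻²)
           - g_{k-1}⁻²(p_k² + p_{k-1}² + p_k p_{k-1} + g_{k-1}⁻² + g_{k-2}⁻²)`. -/
theorem stmt15 (γ : ℝ → ℤ → ℂ × ℂ) (α β : ℝ → ℤ → ℂ) (lam : ℂ)
    (hg : ∀ (t : ℝ) (k : ℤ), gD γ t k ≠ 0)
    (hgsum : ∀ (t : ℝ) (k : ℤ), gD γ t (k - 1) + gD γ t k ≠ 0)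
    (hu : ∀ (t : ℝ) (k : ℤ), uD γ t k ≠ 0)
    (hα : ∀ (t : ℝ) (k : ℤ), α t k =
      -(1 / 2) * ((gD γ t (k - 1) - gD γ t k) / (gD γ t (k - 1) + gD γ t k)) *
          (pD γ lam t k ^ 3 + lam ^ 3
            - 2 * (pD γ lam t k + lam) * (gD γ t k)⁻¹ * (gD γ t (k - 1))⁻¹)
        - (1 / 2) * (gD γ t k ^ 2)⁻¹ * (2 * pD γ lam t k + pD γ lam t (k + 1))
        + (1 / 2) * (gD γ t (k - 1) ^ 2)⁻¹ * (pD γ lam t (k - 1) + 2 * pD γ lam t k))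
    (hβ : ∀ (t : ℝ) (k : ℤ), β t k =
      -(gD γ t (k - 1) * gD γ t k * (pD γ lam t k + lam) / (gD γ t (k - 1) + gD γ t k)) *
        ((gD γ t (k - 1) ^ 2)⁻¹ + (gD γ t k ^ 2)⁻¹
          + pD γ lam t k ^ 2 - lam * pD γ lam t k + lam ^ 2))
    (hflow : ∀ (t : ℝ) (k : ℤ), HasDerivAt (fun s => γ s k)
      (α t k • γ t k + (β t k / uD γ t k) • (γ t (k + 1) - γ t (k - 1))) t) :
    ∀ (t : ℝ) (k : ℤ),
      HasDerivAt (fun s => gD γ s k)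
        (gD γ t k * (-(1 / 2) *
          ((pD γ lam t (k + 1) ^ 3 + pD γ lam t (k + 2) * (gD γ t (k + 1) ^ 2)⁻¹
              + 2 * pD γ lam t (k + 1) * (gD γ t (k + 1) ^ 2)⁻¹
              + pD γ lam t (k + 1) * (gD γ t k ^ 2)⁻¹)
            - (pD γ lam t k ^ 3 + pD γ lam t (k - 1) * (gD γ t (k - 1) ^ 2)⁻¹
              + pD γ lam t k * (gD γ t k ^ 2)⁻¹
              + 2 * pD γ lam t k * (gD γ t (k - 1) ^ 2)⁻¹)))) t ∧
      HasDerivAt (fun s => pD γ lam s k)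
        ((gD γ t k ^ 2)⁻¹ * (pD γ lam t (k + 1) ^ 2 + pD γ lam t k ^ 2
            + pD γ lam t (k + 1) * pD γ lam t k
            + (gD γ t (k + 1) ^ 2)⁻¹ + (gD γ t k ^ 2)⁻¹)
          - (gD γ t (k - 1) ^ 2)⁻¹ * (pD γ lam t k ^ 2 + pD γ lam t (k - 1) ^ 2
            + pD γ lam t k * pD γ lam t (k - 1)
            + (gD γ t (k - 1) ^ 2)⁻¹ + (gD γ t (k - 2) ^ 2)⁻¹)) t := by
  intro t k
  have hg0 : gD γ t k ≠ 0 := hg t k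
  have hgm1 : gD γ t (k - 1) ≠ 0 := hg t (k - 1)
  have hg1 : gD γ t (k + 1) ≠ 0 := hg t (k + 1)
  have hgm2 : gD γ t (k - 2) ≠ 0 := hg t (k - 2)
  have hu0 : uD γ t k ≠ 0 := hu t k
  have hum1 : uD γ t (k - 1) ≠ 0 := hu t (k - 1)
  have hu1ne : uD γ t (k + 1) ≠ 0 := hu t (k + 1)
  have hs0 : gD γ t (k - 1) + gD γ t k ≠ 0 := hgsum t k
  have hs1 : gD γ t k + gD γ t (k + 1) ≠ 0 := by
    have h := hgsum t (k + 1); rwa [show k + 1 - 1 = k from by ring] at h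
  have hsm1 : gD γ t (k - 2) + gD γ t (k - 1) ≠ 0 := by
    have h := hgsum t (k - 1); rwa [show k - 1 - 1 = k - 2 from by ring] at h
  have fk : HasDerivAt (fun s => γ s k)
      (α t k • γ t k + (β t k / uD γ t k) • (γ t (k + 1) - γ t (k - 1))) t := hflow t k
  have fk1 : HasDerivAt (fun s => γ s (k + 1))
      (α t (k + 1) • γ t (k + 1)
        + (β t (k + 1) / uD γ t (k + 1)) • (γ t (k + 2) - γ t k)) t := by
    have h := hflow t (k + 1)
    rw [show k + 1 + 1 = k + 2 from by ring, show k + 1 - 1 = k from by ring] at h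
    exact h
  have fkm : HasDerivAt (fun s => γ s (k - 1))
      (α t (k - 1) • γ t (k - 1)
        + (β t (k - 1) / uD γ t (k - 1)) • (γ t k - γ t (k - 2))) t := by
    have h := hflow t (k - 1)
    rw [show k - 1 + 1 = k from by ring, show k - 1 - 1 = k - 2 from by ring] at h
    exact h
  have Egm2 : gD γ t (k - 2) = det2 (γ t (k - 2)) (γ t (k - 1)) := by
    rw [gD, show k - 2 + 1 = k - 1 from by ring]
  have Egm1 : gD γ t (k - 1) = det2 (γ t (k - 1)) (γ t k) := by
    rw [gD, show k - 1 + 1 = k from by ring]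
  have Eg0 : gD γ t k = det2 (γ t k) (γ t (k + 1)) := rfl
  have Eg1 : gD γ t (k + 1) = det2 (γ t (k + 1)) (γ t (k + 2)) := by
    rw [gD, show k + 1 + 1 = k + 2 from by ring]
  have Eum1 : uD γ t (k - 1) = det2 (γ t (k - 2)) (γ t k) := by
    rw [uD, show k - 1 - 1 = k - 2 from by ring, show k - 1 + 1 = k from by ring]
  have Eu0 : uD γ t k = det2 (γ t (k - 1)) (γ t (k + 1)) := rfl
  have Eu1 : uD γ t (k + 1) = det2 (γ t k) (γ t (k + 2)) := by
    rw [uD, show k + 1 - 1 = k from by ring, show k + 1 + 1 = k + 2 from by ring]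
  have dGk : HasDerivAt (fun s => gD γ s k)
      (det2 (α t k • γ t k + (β t k / uD γ t k) • (γ t (k + 1) - γ t (k - 1))) (γ t (k + 1))
        + det2 (γ t k) (α t (k + 1) • γ t (k + 1)
          + (β t (k + 1) / uD γ t (k + 1)) • (γ t (k + 2) - γ t k))) t :=
    hasDerivAt_det2 fk fk1
  have dGkm : HasDerivAt (fun s => gD γ s (k - 1))
      (det2 (α t (k - 1) • γ t (k - 1)
          + (β t (k - 1) / uD γ t (k - 1)) • (γ t k - γ t (k - 2))) (γ t k)
        + det2 (γ t (k - 1)) (α t k • γ t k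
          + (β t k / uD γ t k) • (γ t (k + 1) - γ t (k - 1)))) t := by
    have hfun : (fun s => gD γ s (k - 1)) = fun s => det2 (γ s (k - 1)) (γ s k) := by
      funext s; rw [gD, show k - 1 + 1 = k from by ring]
    rw [hfun]
    exact hasDerivAt_det2 fkm fk
  have dU : HasDerivAt (fun s => uD γ s k)
      (det2 (α t (k - 1) • γ t (k - 1)
          + (β t (k - 1) / uD γ t (k - 1)) • (γ t k - γ t (k - 2))) (γ t (k + 1))
        + det2 (γ t (k - 1)) (α t (k + 1) • γ t (k + 1)
          + (β t (k + 1) / uD γ t (k + 1)) • (γ t (k + 2) - γ t k))) t :=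
    hasDerivAt_det2 fkm fk1
  have hcA : β t k / uD γ t k * (0 - uD γ t k) = -β t k := by
    rw [zero_sub, mul_neg, div_mul_cancel₀ _ hu0]
  have hcB : β t (k + 1) / uD γ t (k + 1) * (uD γ t (k + 1) - 0) = β t (k + 1) := by
    rw [sub_zero, div_mul_cancel₀ _ hu1ne]
  have hcC : β t (k - 1) / uD γ t (k - 1) * (0 - uD γ t (k - 1)) = -β t (k - 1) := by
    rw [zero_sub, mul_neg, div_mul_cancel₀ _ hum1]
  have hcD : β t k / uD γ t k * (uD γ t k - 0) = β t k := by
    rw [sub_zero, div_mul_cancel₀ _ hu0]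
  have hα1 := hα t (k + 1)
  rw [show k + 1 - 1 = k from by ring, show k + 1 + 1 = k + 2 from by ring] at hα1
  have hβ1 := hβ t (k + 1)
  rw [show k + 1 - 1 = k from by ring] at hβ1
  have hβm1 := hβ t (k - 1)
  rw [show k - 1 - 1 = k - 2 from by ring] at hβm1
  have hpm1 : pD γ lam t (k - 1)
      = uD γ t (k - 1) / (gD γ t (k - 1) * gD γ t (k - 2)) - lam := by
    rw [pD, show k - 1 - 1 = k - 2 from by ring]
  have hp1 : pD γ lam t (k + 1)
      = uD γ t (k + 1) / (gD γ t (k + 1) * gD γ t k) - lam := by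
    rw [pD, show k + 1 - 1 = k from by ring]
  have heum1 : uD γ t (k - 1)
      = (pD γ lam t (k - 1) + lam) * (gD γ t (k - 1) * gD γ t (k - 2)) := by
    rw [hpm1]
    linear_combination -(div_mul_cancel₀ (uD γ t (k - 1)) (mul_ne_zero hgm1 hgm2))
  have heu0 : uD γ t k = (pD γ lam t k + lam) * (gD γ t k * gD γ t (k - 1)) := by
    rw [pD]
    linear_combination -(div_mul_cancel₀ (uD γ t k) (mul_ne_zero hg0 hgm1))
  have heu1 : uD γ t (k + 1)
      = (pD γ lam t (k + 1) + lam) * (gD γ t (k + 1) * gD γ t k) := by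
    rw [hp1]
    linear_combination -(div_mul_cancel₀ (uD γ t (k + 1)) (mul_ne_zero hg1 hg0))
  have hX : det2 (γ t (k - 2)) (γ t (k + 1)) * gD γ t (k - 1)
      = uD γ t (k - 1) * uD γ t k - gD γ t (k - 2) * gD γ t k := by
    have h := pluck (γ t (k - 2)) (γ t (k - 1)) (γ t k) (γ t (k + 1))
    rw [← Egm2, ← Eg0, ← Eum1, ← Eu0, ← Egm1] at h
    linear_combination h
  have hY : det2 (γ t (k - 1)) (γ t (k + 2)) * gD γ t k
      = uD γ t k * uD γ t (k + 1) - gD γ t (k - 1) * gD γ t (k + 1) := by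
    have h := pluck (γ t (k - 1)) (γ t k) (γ t (k + 1)) (γ t (k + 2))
    rw [← Egm1, ← Eg1, ← Eu0, ← Eu1, ← Eg0] at h
    linear_combination h
  have hDg0 : det2 (α t k • γ t k + (β t k / uD γ t k) • (γ t (k + 1) - γ t (k - 1)))
        (γ t (k + 1))
      + det2 (γ t k) (α t (k + 1) • γ t (k + 1)
        + (β t (k + 1) / uD γ t (k + 1)) • (γ t (k + 2) - γ t k)) =
      gD γ t k * (-(1 / 2) *
        ((pD γ lam t (k + 1) ^ 3 + pD γ lam t (k + 2) * (gD γ t (k + 1) ^ 2)⁻¹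
            + 2 * pD γ lam t (k + 1) * (gD γ t (k + 1) ^ 2)⁻¹
            + pD γ lam t (k + 1) * (gD γ t k ^ 2)⁻¹)
          - (pD γ lam t k ^ 3 + pD γ lam t (k - 1) * (gD γ t (k - 1) ^ 2)⁻¹
            + pD γ lam t k * (gD γ t k ^ 2)⁻¹
            + 2 * pD γ lam t k * (gD γ t (k - 1) ^ 2)⁻¹))) := by
    simp only [det2_left, det2_right, det2_self]
    rw [← Eu0, ← Eu1, ← Eg0]
    rw [hcA, hcB]
    linear_combination (algA (gD γ t (k - 1)) (gD γ t k) (gD γ t (k + 1)) lam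
      (pD γ lam t (k - 1)) (pD γ lam t k) (pD γ lam t (k + 1)) (pD γ lam t (k + 2))
      (α t k) (α t (k + 1)) (β t k) (β t (k + 1))
      hgm1 hg0 hg1 hs0 hs1 (hα t k) hα1 (hβ t k) hβ1)
  have hdiv := (dU.div (dGk.mul dGkm) (mul_ne_zero hg0 hgm1)).sub_const lam
  have hEq : ((det2 (α t (k - 1) • γ t (k - 1)
          + (β t (k - 1) / uD γ t (k - 1)) • (γ t k - γ t (k - 2))) (γ t (k + 1))
        + det2 (γ t (k - 1)) (α t (k + 1) • γ t (k + 1)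
          + (β t (k + 1) / uD γ t (k + 1)) • (γ t (k + 2) - γ t k)))
        * (gD γ t k * gD γ t (k - 1))
      - uD γ t k *
        ((det2 (α t k • γ t k + (β t k / uD γ t k) • (γ t (k + 1) - γ t (k - 1)))
            (γ t (k + 1))
          + det2 (γ t k) (α t (k + 1) • γ t (k + 1)
            + (β t (k + 1) / uD γ t (k + 1)) • (γ t (k + 2) - γ t k))) * gD γ t (k - 1)
        + gD γ t k *
          (det2 (α t (k - 1) • γ t (k - 1)
              + (β t (k - 1) / uD γ t (k - 1)) • (γ t k - γ t (k - 2))) (γ t k)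
            + det2 (γ t (k - 1)) (α t k • γ t k
              + (β t k / uD γ t k) • (γ t (k + 1) - γ t (k - 1)))))) /
      (gD γ t k * gD γ t (k - 1)) ^ 2 =
      (gD γ t k ^ 2)⁻¹ * (pD γ lam t (k + 1) ^ 2 + pD γ lam t k ^ 2
          + pD γ lam t (k + 1) * pD γ lam t k
          + (gD γ t (k + 1) ^ 2)⁻¹ + (gD γ t k ^ 2)⁻¹)
        - (gD γ t (k - 1) ^ 2)⁻¹ * (pD γ lam t k ^ 2 + pD γ lam t (k - 1) ^ 2
          + pD γ lam t k * pD γ lam t (k - 1)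
          + (gD γ t (k - 1) ^ 2)⁻¹ + (gD γ t (k - 2) ^ 2)⁻¹) := by
    simp only [det2_left, det2_right, det2_self]
    rw [← Eu0, ← Eu1, ← Egm1, ← Eum1, ← Eg0]
    rw [hcA, hcB, hcC, hcD]
    linear_combination (algB (gD γ t (k - 2)) (gD γ t (k - 1)) (gD γ t k) (gD γ t (k + 1))
      (uD γ t (k - 1)) (uD γ t k) (uD γ t (k + 1)) lam
      (pD γ lam t (k - 1)) (pD γ lam t k) (pD γ lam t (k + 1))
      (α t (k - 1)) (α t k) (α t (k + 1)) (β t (k - 1)) (β t k) (β t (k + 1))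
      (det2 (γ t (k - 2)) (γ t (k + 1))) (det2 (γ t (k - 1)) (γ t (k + 2)))
      hgm2 hgm1 hg0 hg1 hsm1 hs0 hs1 hum1 hu1ne heum1 heu0 heu1 hX hY
      (hα t k) hβm1 (hβ t k) hβ1)
  rw [hDg0] at dGk
  rw [Pi.mul_apply] at hdiv
  rw [hEq] at hdiv
  exact ⟨dGk, hdiv⟩
end
end
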